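/- arXiv:1703.03944 — 6 statements merged into one kernel-verified Lean document; each statement's English description precedes it below -/
import Mathlib

section
/- Let F : ℝ³ → ℝ be a smooth function of the variables (a,b,c). Then F satisfies the system of second-order PDEs F_aa = 0, F_ab = 0, 2·F_ac + F_bb = 0, F_bc = 0, F_cc = 0 identically on ℝ³ if and only if there exist real constants B₀, B₁, B₂, B₃, B₄ such that F(a,b,c) = B₀ + B₁·a + B₂·b + B₃·c + B₄·(a·c − b²) for all (a,b,c). In other words, the solutions of the fully symmetrized system ∂²F/∂u_(ij}∂u_{kl)} = 0 for n = 2 are exactly the (constant-coefficient) Monge–Ampère operators. -/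
/-- The partial derivative of `G : ℝ³ → ℝ` in the constant direction `v`. -/
noncomputable def pd (v : ℝ × ℝ × ℝ) (G : ℝ × ℝ × ℝ → ℝ) : ℝ × ℝ × ℝ → ℝ :=
  fun p => fderiv ℝ G p v

/-- Direction of the variable `a`. -/
def ea : ℝ × ℝ × ℝ := (1, 0, 0)
/-- Direction of the variable `b`. -/
def eb : ℝ × ℝ × ℝ := (0, 1, 0)
/-- Direction of the variable `c`. -/
def ec : ℝ × ℝ × ℝ := (0, 0, 1)


lemma add_smul_ea (p : ℝ × ℝ × ℝ) (t : ℝ) : p + t • ea = (p.1 + t, p.2.1, p.2.2) := by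
  simp [ea, Prod.ext_iff]
lemma add_smul_eb (p : ℝ × ℝ × ℝ) (t : ℝ) : p + t • eb = (p.1, p.2.1 + t, p.2.2) := by
  simp [eb, Prod.ext_iff]
lemma add_smul_ec (p : ℝ × ℝ × ℝ) (t : ℝ) : p + t • ec = (p.1, p.2.1, p.2.2 + t) := by
  simp [ec, Prod.ext_iff]

lemma pd_contDiff {G : ℝ × ℝ × ℝ → ℝ} (hG : ContDiff ℝ (⊤ : ℕ∞) G) (v : ℝ × ℝ × ℝ) :
    ContDiff ℝ (⊤ : ℕ∞) (pd v G) :=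
  (hG.fderiv_right (by simp)).clm_apply contDiff_const

lemma pd_comm {G : ℝ × ℝ × ℝ → ℝ} (hG : ContDiff ℝ (⊤ : ℕ∞) G) (v w p : ℝ × ℝ × ℝ) :
    pd v (pd w G) p = pd w (pd v G) p := by
  have hd : DifferentiableAt ℝ (fderiv ℝ G) p :=
    ((hG.fderiv_right (m := (⊤ : ℕ∞)) (by simp)).differentiable (by simp)) p
  have key : ∀ u : ℝ × ℝ × ℝ, fderiv ℝ (pd u G) p = (fderiv ℝ (fderiv ℝ G) p).flip u := by
    intro u
    have h1 : pd u G = fun y => (fderiv ℝ G y) ((fun _ => u) y) := rfl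
    rw [h1, fderiv_clm_apply hd (differentiableAt_const u)]
    simp
  have hs := (hG.contDiffAt (x := p)).isSymmSndFDerivAt (n := (⊤ : ℕ∞)) (by rw [minSmoothness_of_isRCLikeNormedField]; exact WithTop.coe_le_coe.mpr le_top)
  show fderiv ℝ (pd w G) p v = fderiv ℝ (pd v G) p w
  rw [key w, key v]
  simpa using hs v w

lemma hasDerivAt_line {G : ℝ × ℝ × ℝ → ℝ} (hG : Differentiable ℝ G) (p v : ℝ × ℝ × ℝ) (t : ℝ) :
    HasDerivAt (fun s : ℝ => G (p + s • v)) (pd v G (p + t • v)) t := by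
  have h1 : HasDerivAt (fun s : ℝ => p + s • v) v t := by
    simpa using ((hasDerivAt_id t).smul_const v).const_add p
  simpa [pd, Function.comp_def] using (hG (p + t • v)).hasFDerivAt.comp_hasDerivAt t h1

lemma pd_of_line {G : ℝ × ℝ × ℝ → ℝ} (hG : Differentiable ℝ G) (p v : ℝ × ℝ × ℝ) {d : ℝ}
    (h : HasDerivAt (fun t : ℝ => G (p + t • v)) d 0) : pd v G p = d := by
  have h2 := hasDerivAt_line hG p v 0
  rw [zero_smul, add_zero] at h2
  exact h2.unique h

lemma eq_of_deriv_eq {g ψ : ℝ → ℝ} {d : ℝ → ℝ}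
    (hg : ∀ t, HasDerivAt g (d t) t) (hψ : ∀ t, HasDerivAt ψ (d t) t) (h0 : g 0 = ψ 0)
    (t : ℝ) : g t = ψ t := by
  have h : ∀ s, HasDerivAt (fun u => g u - ψ u) 0 s := fun s => by
    have := (hg s).sub (hψ s)
    rw [sub_self] at this
    exact this
  have hc : g t - ψ t = g 0 - ψ 0 :=
    is_const_of_deriv_eq_zero (fun s => (h s).differentiableAt) (fun s => (h s).deriv) t 0
  linarith

lemma hasDerivAt_quad (c0 c1 c2 t : ℝ) :
    HasDerivAt (fun s : ℝ => c0 + c1 * s + c2 * s ^ 2) (c1 + 2 * c2 * t) t := by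
  have h1 : HasDerivAt (fun s : ℝ => c0 + c1 * s) c1 t := by
    simpa using ((hasDerivAt_id t).const_mul c1).const_add c0
  have h2 : HasDerivAt (fun s : ℝ => c2 * s ^ 2) (2 * c2 * t) t := by
    have := (hasDerivAt_pow 2 t).const_mul c2
    exact this.congr_deriv (by push_cast; ring)
  exact h1.add h2

lemma line_eval {G : ℝ × ℝ × ℝ → ℝ} (hG : Differentiable ℝ G) (p v : ℝ × ℝ × ℝ) (k l : ℝ)
    (h : ∀ t : ℝ, pd v G (p + t • v) = k + 2 * l * t) (t : ℝ) :
    G (p + t • v) = G p + k * t + l * t ^ 2 := by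
  have hg : ∀ s, HasDerivAt (fun u : ℝ => G (p + u • v)) (k + 2 * l * s) s := fun s => by
    simpa [h s] using hasDerivAt_line hG p v s
  have hψ : ∀ s, HasDerivAt (fun u : ℝ => G p + k * u + l * u ^ 2) (k + 2 * l * s) s :=
    fun s => hasDerivAt_quad _ _ _ s
  have := eq_of_deriv_eq hg hψ (by simp) t
  simpa using this

lemma add_smul_gen (p v : ℝ × ℝ × ℝ) (t : ℝ) :
    p + t • v = (p.1 + t * v.1, p.2.1 + t * v.2.1, p.2.2 + t * v.2.2) := by
  simp [Prod.ext_iff, smul_eq_mul]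

def monge (B₀ B₁ B₂ B₃ B₄ : ℝ) : ℝ × ℝ × ℝ → ℝ :=
  fun p => B₀ + B₁ * p.1 + B₂ * p.2.1 + B₃ * p.2.2 + B₄ * (p.1 * p.2.2 - p.2.1 ^ 2)

def lin (k l m n : ℝ) : ℝ × ℝ × ℝ → ℝ :=
  fun p => k + l * p.1 + m * p.2.1 + n * p.2.2

lemma monge_diff (B₀ B₁ B₂ B₃ B₄ : ℝ) : Differentiable ℝ (monge B₀ B₁ B₂ B₃ B₄) := by
  unfold monge; fun_prop

lemma lin_diff (k l m n : ℝ) : Differentiable ℝ (lin k l m n) := by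
  unfold lin; fun_prop

lemma pd_monge (B₀ B₁ B₂ B₃ B₄ : ℝ) (v p : ℝ × ℝ × ℝ) :
    pd v (monge B₀ B₁ B₂ B₃ B₄) p =
      B₁ * v.1 + B₂ * v.2.1 + B₃ * v.2.2 +
        B₄ * (v.1 * p.2.2 + p.1 * v.2.2 - 2 * p.2.1 * v.2.1) := by
  apply pd_of_line (monge_diff _ _ _ _ _) p v
  have he : (fun t : ℝ => monge B₀ B₁ B₂ B₃ B₄ (p + t • v)) =
      fun t : ℝ => monge B₀ B₁ B₂ B₃ B₄ p +
        (B₁ * v.1 + B₂ * v.2.1 + B₃ * v.2.2 +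
          B₄ * (v.1 * p.2.2 + p.1 * v.2.2 - 2 * p.2.1 * v.2.1)) * t +
        (B₄ * (v.1 * v.2.2 - v.2.1 ^ 2)) * t ^ 2 := by
    funext t
    rw [add_smul_gen]
    simp only [monge]
    ring
  rw [he]
  simpa using hasDerivAt_quad (monge B₀ B₁ B₂ B₃ B₄ p) _ (B₄ * (v.1 * v.2.2 - v.2.1 ^ 2)) 0

lemma pd_lin (k l m n : ℝ) (v p : ℝ × ℝ × ℝ) :
    pd v (lin k l m n) p = l * v.1 + m * v.2.1 + n * v.2.2 := by
  apply pd_of_line (lin_diff _ _ _ _) p v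
  have he : (fun t : ℝ => lin k l m n (p + t • v)) =
      fun t : ℝ => lin k l m n p + (l * v.1 + m * v.2.1 + n * v.2.2) * t := by
    funext t
    rw [add_smul_gen]
    simp only [lin]
    ring
  rw [he]
  simpa using ((hasDerivAt_id (0:ℝ)).const_mul (l * v.1 + m * v.2.1 + n * v.2.2)).const_add
    (lin k l m n p)

lemma pd_monge_ea (B₀ B₁ B₂ B₃ B₄ : ℝ) :
    pd ea (monge B₀ B₁ B₂ B₃ B₄) = lin B₁ 0 0 B₄ := by
  funext p; rw [pd_monge]; simp [ea, lin]

lemma pd_monge_eb (B₀ B₁ B₂ B₃ B₄ : ℝ) :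
    pd eb (monge B₀ B₁ B₂ B₃ B₄) = lin B₂ 0 (-(2*B₄)) 0 := by
  funext p; rw [pd_monge]; simp [eb, lin]; ring

lemma pd_monge_ec (B₀ B₁ B₂ B₃ B₄ : ℝ) :
    pd ec (monge B₀ B₁ B₂ B₃ B₄) = lin B₃ B₄ 0 0 := by
  funext p; rw [pd_monge]; simp [ec, lin]

lemma const_of_pd_zero {G : ℝ × ℝ × ℝ → ℝ} (hG : Differentiable ℝ G)
    (h1 : ∀ p, pd ea G p = 0) (h2 : ∀ p, pd eb G p = 0) (h3 : ∀ p, pd ec G p = 0)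
    (a b c : ℝ) : G (a, b, c) = G (0, 0, 0) := by
  have e1 : G (a, b, c) = G (0, b, c) := by
    have h := line_eval hG (0, b, c) ea 0 0 (fun t => by simp [h1]) a
    rw [add_smul_ea] at h
    simpa using h
  have e2 : G (0, b, c) = G (0, 0, c) := by
    have h := line_eval hG (0, 0, c) eb 0 0 (fun t => by simp [h2]) b
    rw [add_smul_eb] at h
    simpa using h
  have e3 : G (0, 0, c) = G (0, 0, 0) := by
    have h := line_eval hG (0, 0, 0) ec 0 0 (fun t => by simp [h3]) c
    rw [add_smul_ec] at h
    simpa using h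
  rw [e1, e2, e3]

/-- A smooth `F(a,b,c)` satisfies the fully symmetrized system
`F_aa = 0`, `F_ab = 0`, `2 F_ac + F_bb = 0`, `F_bc = 0`, `F_cc = 0` identically
iff it is a constant-coefficient Monge–Ampère operator
`B₀ + B₁ a + B₂ b + B₃ c + B₄ (a c − b²)`. -/
theorem completely_exceptional_iff_monge_ampere
    (F : ℝ × ℝ × ℝ → ℝ) (hF : ContDiff ℝ (⊤ : ℕ∞) F) :
    ((∀ p, pd ea (pd ea F) p = 0) ∧
     (∀ p, pd eb (pd ea F) p = 0) ∧
     (∀ p, 2 * pd ec (pd ea F) p + pd eb (pd eb F) p = 0) ∧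
     (∀ p, pd ec (pd eb F) p = 0) ∧
     (∀ p, pd ec (pd ec F) p = 0)) ↔
    (∃ B₀ B₁ B₂ B₃ B₄ : ℝ, ∀ a b c : ℝ,
      F (a, b, c) = B₀ + B₁ * a + B₂ * b + B₃ * c + B₄ * (a * c - b ^ 2)) := by
  constructor
  · rintro ⟨H1, H2, H3, H4, H5⟩
    have hFd : Differentiable ℝ F := hF.differentiable (by simp)
    have hA : ContDiff ℝ (⊤ : ℕ∞) (pd ea F) := pd_contDiff hF ea
    have hB : ContDiff ℝ (⊤ : ℕ∞) (pd eb F) := pd_contDiff hF eb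
    have hC : ContDiff ℝ (⊤ : ℕ∞) (pd ec F) := pd_contDiff hF ec
    have hAd : Differentiable ℝ (pd ea F) := hA.differentiable (by simp)
    have hBd : Differentiable ℝ (pd eb F) := hB.differentiable (by simp)
    have hCd : Differentiable ℝ (pd ec F) := hC.differentiable (by simp)
    have hKd : Differentiable ℝ (pd ec (pd ea F)) :=
      (pd_contDiff hA ec).differentiable (by simp)
    have hAa : pd ea (pd ea F) = fun _ => (0:ℝ) := funext H1
    have hAb : pd eb (pd ea F) = fun _ => (0:ℝ) := funext H2
    have hCc : pd ec (pd ec F) = fun _ => (0:ℝ) := funext H5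
    have hCA : pd ec (pd ea F) = pd ea (pd ec F) := funext fun q => pd_comm hF ec ea q
    set B₀ := F (0,0,0) with hB0
    set B₁ := pd ea F (0,0,0) with hB1def
    set B₂ := pd eb F (0,0,0) with hB2def
    set B₃ := pd ec F (0,0,0) with hB3def
    set B₄ := pd ec (pd ea F) (0,0,0) with hB4def
    have z1 : ∀ p, pd ea (pd ec (pd ea F)) p = 0 := fun p => by
      rw [pd_comm hA ea ec p, hAa]; simp [pd]
    have z2 : ∀ p, pd eb (pd ec (pd ea F)) p = 0 := fun p => by
      rw [pd_comm hA eb ec p, hAb]; simp [pd]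
    have z3 : ∀ p, pd ec (pd ec (pd ea F)) p = 0 := fun p => by
      rw [hCA, pd_comm hC ec ea p, hCc]; simp [pd]
    have hK : ∀ p, pd ec (pd ea F) p = B₄ := fun p => by
      obtain ⟨a, b, c⟩ := p
      exact const_of_pd_zero hKd z1 z2 z3 a b c
    have hAval : ∀ a b c : ℝ, pd ea F (a, b, c) = B₁ + B₄ * c := by
      intro a b c
      have e1 : pd ea F (a, b, 0) = pd ea F (0, b, 0) := by
        have h := line_eval hAd (0, b, 0) ea 0 0 (fun t => by simp [H1]) a
        rw [add_smul_ea] at h; simpa using h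
      have e2 : pd ea F (0, b, 0) = B₁ := by
        have h := line_eval hAd (0, 0, 0) eb 0 0 (fun t => by simp [H2]) b
        rw [add_smul_eb] at h; simpa using h
      have s1 : pd ea F (a, b, c) = pd ea F (a, b, 0) + B₄ * c := by
        have h := line_eval hAd (a, b, 0) ec B₄ 0 (fun t => by simp [hK]) c
        rw [add_smul_ec] at h; simpa using h
      rw [s1, e1, e2]
    have hCval : ∀ a b c : ℝ, pd ec F (a, b, c) = B₃ + B₄ * a := by
      intro a b c
      have e1 : pd ec F (0, b, c) = pd ec F (0, 0, c) := by
        have h := line_eval hCd (0, 0, c) eb 0 0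
          (fun t => by rw [pd_comm hF eb ec]; simp [H4]) b
        rw [add_smul_eb] at h; simpa using h
      have e2 : pd ec F (0, 0, c) = B₃ := by
        have h := line_eval hCd (0, 0, 0) ec 0 0 (fun t => by simp [H5]) c
        rw [add_smul_ec] at h; simpa using h
      have s1 : pd ec F (a, b, c) = pd ec F (0, b, c) + B₄ * a := by
        have h := line_eval hCd (0, b, c) ea B₄ 0
          (fun t => by rw [pd_comm hF ea ec]; simp [hK]) a
        rw [add_smul_ea] at h; simpa using h
      rw [s1, e1, e2]
    have hBB : ∀ p, pd eb (pd eb F) p = -(2 * B₄) := fun p => by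
      have h3 := H3 p
      have hk := hK p
      linarith
    have hBval : ∀ a b c : ℝ, pd eb F (a, b, c) = B₂ - 2 * B₄ * b := by
      intro a b c
      have e1 : pd eb F (a, 0, c) = pd eb F (0, 0, c) := by
        have h := line_eval hBd (0, 0, c) ea 0 0
          (fun t => by rw [pd_comm hF ea eb]; simp [H2]) a
        rw [add_smul_ea] at h; simpa using h
      have e2 : pd eb F (0, 0, c) = B₂ := by
        have h := line_eval hBd (0, 0, 0) ec 0 0 (fun t => by simp [H4]) c
        rw [add_smul_ec] at h; simpa using h
      have s1 : pd eb F (a, b, c) = pd eb F (a, 0, c) + (-(2 * B₄)) * b := by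
        have h := line_eval hBd (a, 0, c) eb (-(2 * B₄)) 0 (fun t => by simp [hBB]) b
        rw [add_smul_eb] at h; simpa using h
      rw [s1, e1, e2]; ring
    refine ⟨B₀, B₁, B₂, B₃, B₄, fun a b c => ?_⟩
    have f3 : F (a, 0, 0) = B₀ + B₁ * a := by
      have h := line_eval hFd (0, 0, 0) ea B₁ 0
        (fun t => by rw [add_smul_ea]; simp [hAval]) a
      rw [add_smul_ea] at h; simpa using h
    have f2 : F (a, b, 0) = F (a, 0, 0) + B₂ * b + (-B₄) * b ^ 2 := by
      have h := line_eval hFd (a, 0, 0) eb B₂ (-B₄)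
        (fun t => by rw [add_smul_eb]; rw [hBval]; ring) b
      rw [add_smul_eb] at h; simpa using h
    have f1 : F (a, b, c) = F (a, b, 0) + (B₃ + B₄ * a) * c := by
      have h := line_eval hFd (a, b, 0) ec (B₃ + B₄ * a) 0
        (fun t => by rw [add_smul_ec]; simp [hCval]) c
      rw [add_smul_ec] at h; simpa using h
    rw [f1, f2, f3]; ring
  · rintro ⟨B₀, B₁, B₂, B₃, B₄, hB⟩
    have hFeq : F = monge B₀ B₁ B₂ B₃ B₄ := funext fun p => by
      obtain ⟨a, b, c⟩ := p
      simpa [monge] using hB a b c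
    subst hFeq
    refine ⟨fun p => ?_, fun p => ?_, fun p => ?_, fun p => ?_, fun p => ?_⟩
    · rw [pd_monge_ea, pd_lin]; norm_num [ea]
    · rw [pd_monge_ea, pd_lin]; norm_num [eb]
    · rw [pd_monge_ea, pd_monge_eb, pd_lin, pd_lin]; norm_num [eb, ec]
    · rw [pd_monge_eb, pd_lin]; norm_num [ec]
    · rw [pd_monge_ec, pd_lin]; norm_num [ec]
end

section
/- Let U ⊆ ℝ³ be open, F : U → ℝ twice continuously differentiable, p ∈ U with F_c(p) ≠ 0, and let λ₁, λ₂ : U → ℝ be functions differentiable at p with λ₁(p) ≠ λ₂(p) and satisfying F_a + F_b·λᵢ + F_c·λᵢ² = 0 on U for i = 1,2. Then the following are equivalent: (i) for both i = 1,2, the complete exceptionality condition (λᵢ)_a + λᵢ·(λᵢ)_b + λᵢ²·(λᵢ)_c = 0 holds at p; (ii) in the polynomial ring ℝ[X], the quadratic polynomial F_a(p) + F_b(p)·X + F_c(p)·X² divides the quartic polynomial F_aa(p) + 2·F_ab(p)·X + (2·F_ac(p) + F_bb(p))·X² + 2·F_bc(p)·X³ + F_cc(p)·X⁴. -/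
open Polynomial Filter Topology

namespace Polynomial

variable {R : Type*} [CommRing R]

theorem X_sub_C_mul_X_sub_C_dvd_iff {x y : R} (h : IsUnit (x - y)) (q : R[X]) :
    (X - C x) * (X - C y) ∣ q ↔ q.IsRoot x ∧ q.IsRoot y := by
  constructor
  · rintro ⟨k, rfl⟩
    simp
  · rintro ⟨hx, hy⟩
    exact (isCoprime_X_sub_C_of_isUnit_sub h).mul_dvd (dvd_iff_isRoot.mpr hx)
      (dvd_iff_isRoot.mpr hy)

theorem quadratic_eq_C_mul_X_sub_C_mul_X_sub_C [IsDomain R] {a b c x y : R}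
    (hx : a + b * x + c * x ^ 2 = 0) (hy : a + b * y + c * y ^ 2 = 0) (hxy : x ≠ y) :
    C a + C b * X + C c * X ^ 2 = C c * ((X - C x) * (X - C y)) := by
  have hsum : b + c * (x + y) = 0 := by
    refine (mul_eq_zero.mp ?_).resolve_left (sub_ne_zero.mpr hxy)
    linear_combination hx - hy
  have hb : b = -c * (x + y) := by linear_combination hsum
  have ha : a = c * (x * y) := by linear_combination hx - x * hsum
  simp only [ha, hb, C_mul, C_neg, C_add]
  ring

end Polynomial

noncomputable def symbol (F : ℝ × ℝ × ℝ → ℝ) (q : ℝ × ℝ × ℝ) : ℝ[X] :=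
  C (pd ea F q) + C (pd eb F q) * X + C (pd ec F q) * X ^ 2

noncomputable def secondSymbol (F : ℝ × ℝ × ℝ → ℝ) (q : ℝ × ℝ × ℝ) : ℝ[X] :=
  C (pd ea (pd ea F) q) + C (2 * pd eb (pd ea F) q) * X +
    C (2 * pd ec (pd ea F) q + pd eb (pd eb F) q) * X ^ 2 +
    C (2 * pd ec (pd eb F) q) * X ^ 3 + C (pd ec (pd ec F) q) * X ^ 4

section Symbols

variable {F : ℝ × ℝ × ℝ → ℝ} {q : ℝ × ℝ × ℝ} {x : ℝ}

@[simp]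
theorem eval_derivative_symbol :
    (symbol F q).derivative.eval x = pd eb F q + 2 * pd ec F q * x := by
  simp only [symbol, derivative_add, derivative_C, derivative_C_mul_X, derivative_C_mul_X_pow,
    eval_add, eval_zero, eval_C, eval_mul, eval_X, eval_pow]
  ring

@[simp]
theorem eval_secondSymbol :
    (secondSymbol F q).eval x = pd ea (pd ea F) q + 2 * pd eb (pd ea F) q * x +
      (2 * pd ec (pd ea F) q + pd eb (pd eb F) q) * x ^ 2 + 2 * pd ec (pd eb F) q * x ^ 3 +
      pd ec (pd ec F) q * x ^ 4 := by
  simp [secondSymbol]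

end Symbols

section Derivatives

variable {F lam : ℝ × ℝ × ℝ → ℝ} {p : ℝ × ℝ × ℝ}

theorem hasFDerivAt_pd (hF : ContDiffAt ℝ 2 F p) (w : ℝ × ℝ × ℝ) :
    HasFDerivAt (pd w F)
      ((ContinuousLinearMap.apply ℝ ℝ w).comp (fderiv ℝ (fderiv ℝ F) p)) p := by
  have hF' : DifferentiableAt ℝ (fderiv ℝ F) p :=
    (hF.fderiv_right (m := 1) (by norm_num)).differentiableAt (by norm_num)
  exact (ContinuousLinearMap.apply ℝ ℝ w).hasFDerivAt.comp p hF'.hasFDerivAt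

theorem pd_pd_eq_fderiv_fderiv (hF : ContDiffAt ℝ 2 F p) (v w : ℝ × ℝ × ℝ) :
    pd v (pd w F) p = fderiv ℝ (fderiv ℝ F) p v w := by
  simp only [pd, (hasFDerivAt_pd hF w).fderiv]
  rfl

theorem pd_pd_comm (hF : ContDiffAt ℝ 2 F p) (v w : ℝ × ℝ × ℝ) :
    pd v (pd w F) p = pd w (pd v F) p := by
  rw [pd_pd_eq_fderiv_fderiv hF, pd_pd_eq_fderiv_fderiv hF]
  exact (hF.isSymmSndFDerivAt (by simp)).eq v w

theorem pd_characteristic_equation (hF : ContDiffAt ℝ 2 F p) (hlam : DifferentiableAt ℝ lam p)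
    (hchar : ∀ᶠ q in 𝓝 p, pd ea F q + pd eb F q * lam q + pd ec F q * lam q ^ 2 = 0)
    (v : ℝ × ℝ × ℝ) :
    pd v (pd ea F) p + pd v (pd eb F) p * lam p + pd v (pd ec F) p * lam p ^ 2 +
      (pd eb F p + 2 * pd ec F p * lam p) * pd v lam p = 0 := by
  have hzero : HasFDerivAt (fun q => pd ea F q + pd eb F q * lam q + pd ec F q * lam q ^ 2)
      (0 : (ℝ × ℝ × ℝ) →L[ℝ] ℝ) p :=
    (hasFDerivAt_const 0 p).congr_of_eventuallyEq hchar
  have hchain := ((hasFDerivAt_pd hF ea).add ((hasFDerivAt_pd hF eb).mul hlam.hasFDerivAt)).add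
    ((hasFDerivAt_pd hF ec).mul (hlam.hasFDerivAt.pow 2))
  have hv := congrArg (fun L : (ℝ × ℝ × ℝ) →L[ℝ] ℝ => L v) (hzero.unique hchain)
  simp only [zero_apply, add_apply, smul_apply, ContinuousLinearMap.comp_apply,
    ContinuousLinearMap.apply_apply, smul_eq_mul, nsmul_eq_mul, Nat.reduceSub, pow_one,
    Nat.cast_ofNat] at hv
  rw [pd_pd_eq_fderiv_fderiv hF, pd_pd_eq_fderiv_fderiv hF, pd_pd_eq_fderiv_fderiv hF]
  unfold pd at hv ⊢
  linear_combination -hv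

theorem eval_derivative_symbol_mul_add_eval_secondSymbol (hF : ContDiffAt ℝ 2 F p)
    (hlam : DifferentiableAt ℝ lam p)
    (hchar : ∀ᶠ q in 𝓝 p, pd ea F q + pd eb F q * lam q + pd ec F q * lam q ^ 2 = 0) :
    (symbol F p).derivative.eval (lam p) *
        (pd ea lam p + lam p * pd eb lam p + lam p ^ 2 * pd ec lam p) +
      (secondSymbol F p).eval (lam p) = 0 := by
  rw [eval_derivative_symbol, eval_secondSymbol]
  linear_combination pd_characteristic_equation hF hlam hchar ea +
    lam p * pd_characteristic_equation hF hlam hchar eb +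
    lam p ^ 2 * pd_characteristic_equation hF hlam hchar ec -
    lam p * pd_pd_comm hF ea eb - lam p ^ 2 * pd_pd_comm hF ea ec - lam p ^ 3 * pd_pd_comm hF eb ec

theorem exceptional_iff_isRoot_secondSymbol (hF : ContDiffAt ℝ 2 F p)
    (hlam : DifferentiableAt ℝ lam p)
    (hchar : ∀ᶠ q in 𝓝 p, pd ea F q + pd eb F q * lam q + pd ec F q * lam q ^ 2 = 0)
    (hsimple : (symbol F p).derivative.eval (lam p) ≠ 0) :
    pd ea lam p + lam p * pd eb lam p + lam p ^ 2 * pd ec lam p = 0 ↔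
      (secondSymbol F p).IsRoot (lam p) := by
  rw [IsRoot, eq_neg_of_add_eq_zero_right
    (eval_derivative_symbol_mul_add_eval_secondSymbol hF hlam hchar), neg_eq_zero,
    mul_eq_zero, or_iff_right hsimple]

end Derivatives

/-- For a hyperbolic `F` with two distinct characteristic speeds `λ₁ ≠ λ₂`,
Lax's complete exceptionality condition `(λᵢ)_a + λᵢ (λᵢ)_b + λᵢ² (λᵢ)_c = 0` at `p`
(for both `i`) is equivalent to the divisibility of the quartic `S²(F)` by the
quadratic symbol `S(F)` in `ℝ[X]`. -/
theorem complete_exceptionality_iff_symbol_divides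
    (U : Set (ℝ × ℝ × ℝ)) (hU : IsOpen U)
    (F lam₁ lam₂ : ℝ × ℝ × ℝ → ℝ) (p : ℝ × ℝ × ℝ) (hp : p ∈ U)
    (hF : ContDiffOn ℝ 2 F U)
    (hFc : pd ec F p ≠ 0)
    (hlam₁ : DifferentiableAt ℝ lam₁ p) (hlam₂ : DifferentiableAt ℝ lam₂ p)
    (hne : lam₁ p ≠ lam₂ p)
    (hchar₁ : ∀ q ∈ U, pd ea F q + pd eb F q * lam₁ q + pd ec F q * lam₁ q ^ 2 = 0)
    (hchar₂ : ∀ q ∈ U, pd ea F q + pd eb F q * lam₂ q + pd ec F q * lam₂ q ^ 2 = 0) :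
    (pd ea lam₁ p + lam₁ p * pd eb lam₁ p + lam₁ p ^ 2 * pd ec lam₁ p = 0 ∧
     pd ea lam₂ p + lam₂ p * pd eb lam₂ p + lam₂ p ^ 2 * pd ec lam₂ p = 0) ↔
    (C (pd ea F p) + C (pd eb F p) * X + C (pd ec F p) * X ^ 2) ∣
      (C (pd ea (pd ea F) p) + C (2 * pd eb (pd ea F) p) * X +
        C (2 * pd ec (pd ea F) p + pd eb (pd eb F) p) * X ^ 2 +
        C (2 * pd ec (pd eb F) p) * X ^ 3 + C (pd ec (pd ec F) p) * X ^ 4) := by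
  have hFp : ContDiffAt ℝ 2 F p := hF.contDiffAt (hU.mem_nhds hp)
  have hS : symbol F p = C (pd ec F p) * ((X - C (lam₁ p)) * (X - C (lam₂ p))) :=
    quadratic_eq_C_mul_X_sub_C_mul_X_sub_C (hchar₁ p hp) (hchar₂ p hp) hne
  have hsimple₁ : (symbol F p).derivative.eval (lam₁ p) ≠ 0 := by
    rw [hS]
    simpa using mul_ne_zero hFc (sub_ne_zero.mpr hne)
  have hsimple₂ : (symbol F p).derivative.eval (lam₂ p) ≠ 0 := by
    rw [hS]
    simpa using mul_ne_zero hFc (sub_ne_zero.mpr hne.symm)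
  change _ ↔ symbol F p ∣ secondSymbol F p
  rw [exceptional_iff_isRoot_secondSymbol hFp hlam₁ (eventually_of_mem (hU.mem_nhds hp) hchar₁)
      hsimple₁,
    exceptional_iff_isRoot_secondSymbol hFp hlam₂ (eventually_of_mem (hU.mem_nhds hp) hchar₂)
      hsimple₂,
    hS, (isUnit_C.mpr hFc.isUnit).mul_left_dvd,
    X_sub_C_mul_X_sub_C_dvd_iff (sub_ne_zero.mpr hne).isUnit]
end

section
/- Let F : ℝ³ → ℝ be differentiable and λ : ℝ³ → ℝ be continuously differentiable, and suppose that F_a + F_b·λ + F_c·λ² = 0 identically on ℝ³ (λ is a characteristic speed of F) and that λ_a + λ·λ_b + λ²·λ_c = 0 identically on ℝ³ (the complete exceptionality condition). Then every characteristic of F is strong: for every A₀ ∈ ℝ³ with F(A₀) = 0 and every t ∈ ℝ, F(A₀ + t·(1, λ(A₀), λ(A₀)²)) = 0, i.e., the entire characteristic line through any point of the zero set of F is contained in the zero set of F. -/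
/-!
Along the characteristic line `p s = A₀ + s • (1, λ₀, λ₀²)`, `λ₀ = λ A₀`, complete exceptionality
turns the derivative of `λ ∘ p` into `(λ₀ - λ) (λ_b + (λ₀ + λ) λ_c)`, a linear ODE for `λ ∘ p - λ₀`
with continuous coefficient and zero initial value; hence `λ` is constant on the line. The
characteristic equation then says that `F ∘ p` has zero derivative, so `F` vanishes on the line.
-/

lemma fderiv_apply_eq_pd (G : ℝ × ℝ × ℝ → ℝ) (p : ℝ × ℝ × ℝ) (x y z : ℝ) :
    fderiv ℝ G p (x, y, z) = x * pd ea G p + y * pd eb G p + z * pd ec G p := by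
  have h : ((x, y, z) : ℝ × ℝ × ℝ) = x • ea + y • eb + z • ec := by
    simp [ea, eb, ec]
  rw [h]
  simp only [pd, map_add, map_smul, smul_eq_mul]

lemma DifferentiableAt.hasDerivAt_comp_add_smul {E F : Type*} [NormedAddCommGroup E]
    [NormedSpace ℝ E] [NormedAddCommGroup F] [NormedSpace ℝ F] {G : E → F} {A v : E} {s : ℝ}
    (hG : DifferentiableAt ℝ G (A + s • v)) :
    HasDerivAt (fun u : ℝ => G (A + u • v)) (fderiv ℝ G (A + s • v) v) s := by
  have hline : HasDerivAt (fun u : ℝ => A + u • v) v s := by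
    simpa using ((hasDerivAt_id s).smul_const v).const_add A
  exact hG.hasFDerivAt.comp_hasDerivAt s hline

/-- The integrating factor `exp (-∫ a)` makes `y` constant. -/
lemma eq_zero_of_hasDerivAt_mul_self {y a : ℝ → ℝ} (ha : Continuous a)
    (hy : ∀ s, HasDerivAt y (a s * y s) s) {s₀ : ℝ} (h₀ : y s₀ = 0) (t : ℝ) : y t = 0 := by
  set A : ℝ → ℝ := fun s => ∫ u in s₀..s, a u
  have hconst : ∀ s, HasDerivAt (fun u => y u * Real.exp (-A u)) 0 s := by
    intro s
    have hA : HasDerivAt A (a s) s := (ha.integral_hasStrictDerivAt s₀ s).hasDerivAt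
    refine ((hy s).mul hA.neg.exp).congr_deriv ?_
    ring
  have h := is_const_of_deriv_eq_zero (fun u => (hconst u).differentiableAt)
    (fun u => (hconst u).deriv) t s₀
  simpa [h₀, Real.exp_ne_zero] using h

lemma lam_add_smul_eq_of_completelyExceptional {lam : ℝ × ℝ × ℝ → ℝ} (hlam : ContDiff ℝ 1 lam)
    (hCE : ∀ p, pd ea lam p + lam p * pd eb lam p + lam p ^ 2 * pd ec lam p = 0)
    (A₀ : ℝ × ℝ × ℝ) (t : ℝ) :
    lam (A₀ + t • ((1 : ℝ), lam A₀, lam A₀ ^ 2)) = lam A₀ := by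
  set l₀ := lam A₀
  set p : ℝ → ℝ × ℝ × ℝ := fun s => A₀ + s • ((1 : ℝ), l₀, l₀ ^ 2)
  have hpd : ∀ v, Continuous (pd v lam) := fun v =>
    (hlam.continuous_fderiv one_ne_zero).clm_apply continuous_const
  have hp : Continuous p := by fun_prop
  refine sub_eq_zero.mp <| eq_zero_of_hasDerivAt_mul_self (y := fun s => lam (p s) - l₀)
    (a := fun s => -(pd eb lam (p s) + (l₀ + lam (p s)) * pd ec lam (p s)))
    (by fun_prop) (fun s => ?_) (s₀ := 0)
    (by simp only [p, zero_smul, add_zero]; exact sub_self _) t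
  refine (((hlam.differentiable one_ne_zero).differentiableAt.hasDerivAt_comp_add_smul).sub_const
    l₀).congr_deriv ?_
  rw [fderiv_apply_eq_pd]
  linear_combination hCE (p s)

/-- If `λ` is a characteristic speed of `F` satisfying Lax's complete
exceptionality condition everywhere, then every characteristic of `F` is strong:
the characteristic line through any point of `{F = 0}` stays in `{F = 0}`. -/
theorem completely_exceptional_implies_strong_characteristics
    (F lam : ℝ × ℝ × ℝ → ℝ)
    (hF : Differentiable ℝ F) (hlam : ContDiff ℝ 1 lam)
    (hchar : ∀ p, pd ea F p + pd eb F p * lam p + pd ec F p * lam p ^ 2 = 0)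
    (hCE : ∀ p, pd ea lam p + lam p * pd eb lam p + lam p ^ 2 * pd ec lam p = 0) :
    ∀ A₀ : ℝ × ℝ × ℝ, F A₀ = 0 → ∀ t : ℝ,
      F (A₀ + t • ((1 : ℝ), lam A₀, lam A₀ ^ 2)) = 0 := by
  intro A₀ hA₀ t
  set v : ℝ × ℝ × ℝ := (1, lam A₀, lam A₀ ^ 2)
  have hderiv : ∀ s, HasDerivAt (fun u : ℝ => F (A₀ + u • v)) 0 s := by
    intro s
    set q := A₀ + s • v
    have hlam_q : lam q = lam A₀ := lam_add_smul_eq_of_completelyExceptional hlam hCE A₀ s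
    refine (hF q).hasDerivAt_comp_add_smul.congr_deriv ?_
    rw [fderiv_apply_eq_pd]
    linear_combination hchar q - (pd eb F q + (lam A₀ + lam q) * pd ec F q) * hlam_q
  have h := is_const_of_deriv_eq_zero (fun u => (hderiv u).differentiableAt)
    (fun u => (hderiv u).deriv) t 0
  simpa [hA₀] using h
end

section
/- Let U ⊆ ℝ³ be open, F : U → ℝ twice continuously differentiable, and λ : U → ℝ differentiable with F_a + F_b·λ + F_c·λ² = 0 identically on U. Let p ∈ U satisfy F(p) = 0 and F_b(p) + 2·F_c(p)·λ(p) ≠ 0, and suppose the characteristic through p is strong near p: there is ε > 0 such that for all |t| < ε the point p + t·(1, λ(p), λ(p)²) lies in U and F(p + t·(1, λ(p), λ(p)²)) = 0. Then the complete exceptionality condition holds at p: (λ_a + λ·λ_b + λ²·λ_c)(p) = 0. -/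
/-! Put `v = (1, λ(p), λ(p)²)`. Since `F` vanishes on the line `t ↦ p + t • v`, so does
`t ↦ DF(p + t • v) v`, whence `D²F(p)(v, v) = 0`. Differentiating the characteristic identity
`DF(q)(1, λ(q), λ(q)²) = 0` at `p` in the direction `v` gives
`D²F(p)(v, v) + (F_b + 2 λ F_c)(p) · Dλ(p) v = 0`, so `Dλ(p) v = 0`, which is Lax's condition. -/

open Filter Topology

section LineDerivatives

variable {E F : Type*} [NormedAddCommGroup E] [NormedSpace ℝ E]
  [NormedAddCommGroup F] [NormedSpace ℝ F]

theorem HasFDerivAt.hasDerivAt_comp_line {G : E → F} {G' : E →L[ℝ] F} {x v : E} {t : ℝ}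
    (hG : HasFDerivAt G G' (x + t • v)) : HasDerivAt (fun s : ℝ => G (x + s • v)) (G' v) t := by
  simpa [Function.comp_def] using
    hG.comp_hasDerivAt t (((hasDerivAt_id t).smul_const v).const_add x)

theorem HasDerivAt.eq_zero_of_eventuallyEq_const {g : ℝ → F} {g' c : F} {t : ℝ}
    (hg : HasDerivAt g g' t) (hc : g =ᶠ[𝓝 t] fun _ => c) : g' = 0 :=
  hg.unique ((hasDerivAt_const t c).congr_of_eventuallyEq hc)

theorem HasFDerivAt.eq_zero_of_eventuallyEq_const {g : E → F} {g' : E →L[ℝ] F} {c : F} {x : E}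
    (hg : HasFDerivAt g g' x) (hc : g =ᶠ[𝓝 x] fun _ => c) : g' = 0 :=
  hg.unique ((hasFDerivAt_const c x).congr_of_eventuallyEq hc)

theorem fderiv_fderiv_apply_self_eq_zero_of_eventually_zero_on_line {G : E → F} {x v : E}
    (hG : ∀ᶠ y in 𝓝 x, DifferentiableAt ℝ G y) (hG2 : DifferentiableAt ℝ (fderiv ℝ G) x)
    (hline : ∀ᶠ s in 𝓝 (0 : ℝ), G (x + s • v) = 0) :
    fderiv ℝ (fderiv ℝ G) x v v = 0 := by
  have hcont : Tendsto (fun s : ℝ => x + s • v) (𝓝 0) (𝓝 x) := by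
    simpa using ((continuous_id.smul continuous_const).const_add x).tendsto (0 : ℝ)
  have hslope : ∀ᶠ s in 𝓝 (0 : ℝ), fderiv ℝ G (x + s • v) v = 0 := by
    filter_upwards [hline.eventually_nhds, hcont.eventually hG] with s hzero hdiff
    exact hdiff.hasFDerivAt.hasDerivAt_comp_line.eq_zero_of_eventuallyEq_const hzero
  have hG2' : HasFDerivAt (fderiv ℝ G) (fderiv ℝ (fderiv ℝ G) x) (x + (0 : ℝ) • v) := by
    simpa using hG2.hasFDerivAt
  have hslope' := hG2'.hasDerivAt_comp_line.clm_apply (hasDerivAt_const 0 v)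
  simpa using hslope'.eq_zero_of_eventuallyEq_const (by simpa [EventuallyEq] using hslope)

theorem fderiv_fderiv_apply_add_smul_eq_zero {G : E → F} {lam : E → ℝ} {w : ℝ → E} {x w' : E}
    (hG2 : DifferentiableAt ℝ (fderiv ℝ G) x) (hlam : DifferentiableAt ℝ lam x)
    (hw : HasDerivAt w w' (lam x)) (hchar : ∀ᶠ q in 𝓝 x, fderiv ℝ G q (w (lam q)) = 0) (v : E) :
    fderiv ℝ (fderiv ℝ G) x v (w (lam x)) + fderiv ℝ lam x v • fderiv ℝ G x w' = 0 := by
  have hderiv := hG2.hasFDerivAt.clm_apply (hw.hasFDerivAt.comp x hlam.hasFDerivAt)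
  have := congrArg (· v) (hderiv.eq_zero_of_eventuallyEq_const hchar)
  simpa [add_comm] using this

end LineDerivatives

def charDirection (μ : ℝ) : ℝ × ℝ × ℝ := ea + μ • eb + μ ^ 2 • ec

theorem charDirection_eq (μ : ℝ) : charDirection μ = (1, μ, μ ^ 2) := by
  simp [charDirection, ea, eb, ec]

theorem hasDerivAt_charDirection (μ : ℝ) : HasDerivAt charDirection (eb + (2 * μ) • ec) μ := by
  unfold charDirection
  simpa [Pi.add_def] using (((hasDerivAt_id' μ).smul_const eb).const_add ea).add
    ((hasDerivAt_pow 2 μ).smul_const ec)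

theorem strong_characteristic_implies_lax_condition_general
    (U : Set (ℝ × ℝ × ℝ)) (hU : IsOpen U)
    (F lam : ℝ × ℝ × ℝ → ℝ)
    (hF : ContDiffOn ℝ 2 F U) (hlam : DifferentiableOn ℝ lam U)
    (hchar : ∀ q ∈ U, pd ea F q + pd eb F q * lam q + pd ec F q * lam q ^ 2 = 0)
    (p : ℝ × ℝ × ℝ) (hp : p ∈ U)
    (hnd : pd eb F p + 2 * pd ec F p * lam p ≠ 0)
    (hstrong : ∃ ε > (0 : ℝ), ∀ t : ℝ, |t| < ε →
      p + t • ((1 : ℝ), lam p, lam p ^ 2) ∈ U ∧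
      F (p + t • ((1 : ℝ), lam p, lam p ^ 2)) = 0) :
    pd ea lam p + lam p * pd eb lam p + lam p ^ 2 * pd ec lam p = 0 := by
  obtain ⟨ε, hε, hstr⟩ := hstrong
  have hUp : U ∈ 𝓝 p := hU.mem_nhds hp
  have hFdiff : ∀ᶠ q in 𝓝 p, DifferentiableAt ℝ F q := eventually_of_mem hUp fun q hq =>
    (hF.contDiffAt (hU.mem_nhds hq)).differentiableAt two_ne_zero
  have hF2 : DifferentiableAt ℝ (fderiv ℝ F) p :=
    ((hF.fderiv_of_isOpen hU le_rfl).contDiffAt hUp).differentiableAt one_ne_zero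
  have hline : ∀ᶠ s in 𝓝 (0 : ℝ), F (p + s • charDirection (lam p)) = 0 :=
    Metric.eventually_nhds_iff.2 ⟨ε, hε, fun s hs => by
      simpa [charDirection_eq] using (hstr s (by simpa using hs)).2⟩
  have hcharDir : ∀ᶠ q in 𝓝 p, fderiv ℝ F q (charDirection (lam q)) = 0 :=
    eventually_of_mem hUp fun q hq => by simpa [charDirection, pd, mul_comm] using hchar q hq
  have hderiv := fderiv_fderiv_apply_add_smul_eq_zero hF2 (hlam.differentiableAt hUp)
    (hasDerivAt_charDirection _) hcharDir (charDirection (lam p))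
  rw [fderiv_fderiv_apply_self_eq_zero_of_eventually_zero_on_line hFdiff hF2 hline, zero_add,
    smul_eq_mul] at hderiv
  have hlax : fderiv ℝ lam p (charDirection (lam p)) = 0 :=
    (mul_eq_zero.1 hderiv).resolve_right (by simpa [pd, mul_comm, mul_assoc] using hnd)
  simpa [charDirection, pd, mul_comm] using hlax

/-- If the characteristic of `F` through `p` determined by the characteristic
speed `λ` is strong near `p` (the characteristic line lies in `{F = 0}` for
small `t`), and `F_b(p) + 2 F_c(p) λ(p) ≠ 0`, then Lax's complete
exceptionality condition holds at `p`. -/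
theorem strong_characteristic_implies_lax_condition
    (U : Set (ℝ × ℝ × ℝ)) (hU : IsOpen U)
    (F lam : ℝ × ℝ × ℝ → ℝ)
    (hF : ContDiffOn ℝ 2 F U) (hlam : DifferentiableOn ℝ lam U)
    (hchar : ∀ q ∈ U, pd ea F q + pd eb F q * lam q + pd ec F q * lam q ^ 2 = 0)
    (p : ℝ × ℝ × ℝ) (hp : p ∈ U) (hF0 : F p = 0)
    (hnd : pd eb F p + 2 * pd ec F p * lam p ≠ 0)
    (hstrong : ∃ ε > (0 : ℝ), ∀ t : ℝ, |t| < ε →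
      p + t • ((1 : ℝ), lam p, lam p ^ 2) ∈ U ∧
      F (p + t • ((1 : ℝ), lam p, lam p ^ 2)) = 0) :
    pd ea lam p + lam p * pd eb lam p + lam p ^ 2 * pd ec lam p = 0 :=
  strong_characteristic_implies_lax_condition_general U hU F lam hF hlam hchar p hp hnd hstrong
end

section
/- Fix n ≥ 1 and let F : Matrix (Fin n) (Fin n) ℝ → ℝ be a constant-coefficient Monge–Ampère operator, i.e., a finite linear combination with real constant coefficients of the functions A ↦ det(A.submatrix f g), where for each 1 ≤ k ≤ n, f and g range over strictly monotone maps Fin k → Fin n, together with a constant term. Then for every matrix A and every vector v ∈ ℝⁿ, the function t ↦ F(A + t · v·vᵀ) is affine in t: there exist α, β ∈ ℝ with F(A + t · v·vᵀ) = α + β·t for all t ∈ ℝ. In particular, the second derivative of F along any rank-one symmetric direction vanishes, so F satisfies the complete exceptionality condition S²(F) = 0. -/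
/-- A constant-coefficient Monge–Ampère operator on `n × n` matrices:
a real linear combination of the constant `1` and of the minors
`A ↦ det (A.submatrix f g)` for strictly monotone `f g : Fin k → Fin n`,
`1 ≤ k ≤ n`. -/
def IsMongeAmpereOperator (n : ℕ) (F : Matrix (Fin n) (Fin n) ℝ → ℝ) : Prop :=
  F ∈ Submodule.span ℝ
    ({fun _ => (1 : ℝ)} ∪
      {G : Matrix (Fin n) (Fin n) ℝ → ℝ | ∃ (k : ℕ) (f g : Fin k → Fin n),
        1 ≤ k ∧ k ≤ n ∧ StrictMono f ∧ StrictMono g ∧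
        G = fun A => (A.submatrix f g).det})

/-!
Each row of `A + t • u wᵀ` is the row of `A` plus a multiple of the single vector `w`. Expanding
an alternating map multilinearly in the rows, every term taking the perturbation in two or more
rows has two proportional arguments and vanishes, so only the terms of order `0` and `1` in `t`
survive. Minors of `A + t • u wᵀ` are of the same form, and affinity along a line is preserved
under linear combinations.
-/

open Function Matrix Finset

namespace AlternatingMap

variable {R M N ι : Type*} [CommRing R] [AddCommGroup M] [Module R M] [AddCommGroup N]
  [Module R N] (f : M [⋀^ι]→ₗ[R] N)

theorem map_eq_zero_of_eq_smul_of_eq_smul [DecidableEq ι] {v : ι → M} {w : M} {i j : ι}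
    (hij : i ≠ j) {a b : R} (hi : v i = a • w) (hj : v j = b • w) : f v = 0 := by
  have hv : v = update (update v i (a • w)) j (b • w) := by
    rw [← hi, ← hj, update_eq_self, update_eq_self]
  rw [hv, map_update_smul, update_comm hij, map_update_smul,
    f.map_eq_zero_of_eq _ (by simp [update_of_ne hij.symm]) hij, smul_zero, smul_zero]

theorem map_add_smul_const [DecidableEq ι] [Fintype ι] (x : ι → M) (c : ι → R) (w : M) :
    f (x + fun i => c i • w) = f x + ∑ i, c i • f (update x i w) := by
  have hquad : ∀ s : Finset ι, 2 ≤ #s → f (s.piecewise (fun i => c i • w) x) = 0 := by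
    intro s hs
    obtain ⟨i, hi, j, hj, hij⟩ := one_lt_card.mp hs
    exact f.map_eq_zero_of_eq_smul_of_eq_smul hij (s.piecewise_eq_of_mem _ _ hi)
      (s.piecewise_eq_of_mem _ _ hj)
  have hexpand := (f : MultilinearMap R (fun _ : ι => M) N).map_add_eq_map_add_linearDeriv_add x
    (fun i => c i • w)
  simp only [coe_multilinearMap, MultilinearMap.linearDeriv_apply] at hexpand
  rw [hexpand, sum_eq_zero fun s hs => hquad s (mem_filter.mp hs).2, add_zero]
  simp only [map_update_smul]

end AlternatingMap

namespace Matrix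

variable {R n : Type*} [CommRing R] [Fintype n] [DecidableEq n]

theorem det_add_smul_vecMulVec (A : Matrix n n R) (u w : n → R) (t : R) :
    (A + t • vecMulVec u w).det = A.det + t * ∑ i, u i * (A.updateRow i w).det := by
  have hrows : A + t • vecMulVec u w = A + of fun i => (t * u i) • w := by
    ext i j
    simp [vecMulVec_apply, mul_assoc]
  rw [hrows, mul_sum]
  refine (detRowAlternating.map_add_smul_const A (fun i => t * u i) w).trans ?_
  simp only [smul_eq_mul, mul_assoc]
  rfl

end Matrix

section AffineAlong

variable (R : Type*) {E : Type*} [CommRing R] [AddCommGroup E] [Module R E]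

def affineAlong (D : Set E) : Submodule R (E → R) where
  carrier := {F | ∀ a, ∀ d ∈ D, ∃ α β : R, ∀ t : R, F (a + t • d) = α + β * t}
  zero_mem' a d _ := ⟨0, 0, fun t => by simp⟩
  add_mem' {F G} hF hG a d hd := by
    obtain ⟨α, β, hαβ⟩ := hF a d hd
    obtain ⟨γ, δ, hγδ⟩ := hG a d hd
    exact ⟨α + γ, β + δ, fun t => by rw [Pi.add_apply, hαβ, hγδ]; ring⟩
  smul_mem' c F hF a d hd := by
    obtain ⟨α, β, hαβ⟩ := hF a d hd
    exact ⟨c * α, c * β, fun t => by rw [Pi.smul_apply, hαβ, smul_eq_mul]; ring⟩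

variable {R}

theorem mem_affineAlong {D : Set E} {F : E → R} :
    F ∈ affineAlong R D ↔ ∀ a, ∀ d ∈ D, ∃ α β : R, ∀ t : R, F (a + t • d) = α + β * t :=
  Iff.rfl

theorem const_mem_affineAlong (D : Set E) (c : R) : (fun _ => c) ∈ affineAlong R D :=
  fun _ _ _ => ⟨c, 0, fun t => by simp⟩

end AffineAlong

theorem det_submatrix_mem_affineAlong_vecMulVec {R m n k : Type*} [CommRing R] [Fintype k]
    [DecidableEq k] (f : k → m) (g : k → n) :
    (fun A : Matrix m n R => (A.submatrix f g).det) ∈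
      affineAlong R {D | ∃ u w, vecMulVec u w = D} := by
  rintro A _ ⟨u, w, rfl⟩
  refine ⟨(A.submatrix f g).det,
    ∑ i, u (f i) * ((A.submatrix f g).updateRow i (w ∘ g)).det, fun t => ?_⟩
  rw [mul_comm _ t]
  exact det_add_smul_vecMulVec (A.submatrix f g) (u ∘ f) (w ∘ g) t

theorem IsMongeAmpereOperator.mem_affineAlong_vecMulVec {n : ℕ}
    {F : Matrix (Fin n) (Fin n) ℝ → ℝ} (hF : IsMongeAmpereOperator n F) :
    F ∈ affineAlong ℝ {D | ∃ u w, vecMulVec u w = D} := by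
  refine Submodule.span_le.mpr ?_ hF
  rintro G (rfl | ⟨k, f, g, -, -, -, -, rfl⟩)
  · exact const_mem_affineAlong _ 1
  · exact det_submatrix_mem_affineAlong_vecMulVec f g

theorem monge_ampere_affine_along_rank_one_general
    (n : ℕ) (F : Matrix (Fin n) (Fin n) ℝ → ℝ)
    (hF : IsMongeAmpereOperator n F) :
    ∀ (A : Matrix (Fin n) (Fin n) ℝ) (v : Fin n → ℝ),
      ∃ α β : ℝ, ∀ t : ℝ,
        F (A + t • Matrix.vecMulVec v v) = α + β * t :=
  fun A v => mem_affineAlong.mp hF.mem_affineAlong_vecMulVec A _ ⟨v, v, rfl⟩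

/-- A constant-coefficient Monge–Ampère operator is affine along every rank-one
symmetric direction `v vᵀ`; hence its second derivative along such directions
vanishes, i.e. `S²(F) = 0`. -/
theorem monge_ampere_affine_along_rank_one
    (n : ℕ) (hn : 1 ≤ n) (F : Matrix (Fin n) (Fin n) ℝ → ℝ)
    (hF : IsMongeAmpereOperator n F) :
    ∀ (A : Matrix (Fin n) (Fin n) ℝ) (v : Fin n → ℝ),
      ∃ α β : ℝ, ∀ t : ℝ,
        F (A + t • Matrix.vecMulVec v v) = α + β * t :=
  monge_ampere_affine_along_rank_one_general n F hF
end

section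
/- Let A be an n×n real matrix, v, w ∈ ℝⁿ, and let f, g : Fin k → Fin n be arbitrary maps. Then the k×k minor t ↦ det((A + t · v·wᵀ).submatrix f g) is an affine function of t: there exist α, β ∈ ℝ such that det((A + t · v·wᵀ).submatrix f g) = α + β·t for all t ∈ ℝ. (In particular, every minor of a rank-one perturbation A + t·v·wᵀ depends affinely on t.) -/
/-- Every minor of a rank-one perturbation `A + t v wᵀ` is an affine function
of the parameter `t` (matrix determinant lemma for minors). -/
theorem minor_of_rank_one_update_is_affine
    (n k : ℕ) (A : Matrix (Fin n) (Fin n) ℝ) (v w : Fin n → ℝ)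
    (f g : Fin k → Fin n) :
    ∃ α β : ℝ, ∀ t : ℝ,
      ((A + t • Matrix.vecMulVec v w).submatrix f g).det = α + β * t := by
  classical
  set B : Fin k → Fin k → ℝ := fun i j => A (f i) (g j) with hB
  set u : Fin k → ℝ := w ∘ g with hu
  set c : Fin k → ℝ := v ∘ f with hc
  set D : (Fin k → ℝ) [⋀^Fin k]→ₗ[ℝ] ℝ := Matrix.detRowAlternating with hD
  refine ⟨D B, ∑ j, c j * D (Function.update B j u), fun t => ?_⟩
  have hmat : ((A + t • Matrix.vecMulVec v w).submatrix f g)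
      = Matrix.of ((fun i => (t * c i) • u) + B) := by
    ext i j
    simp [Matrix.vecMulVec_apply, hB, hu, hc]
    ring
  have hdet : ((A + t • Matrix.vecMulVec v w).submatrix f g).det
      = D ((fun i => (t * c i) • u) + B) := by rw [hmat]; rfl
  rw [hdet]
  rw [show D ((fun i => (t * c i) • u) + B)
      = ∑ s : Finset (Fin k), D (s.piecewise (fun i => (t * c i) • u) B)
    from D.toMultilinearMap.map_add_univ _ _]
  -- each summand
  have key : ∀ s : Finset (Fin k),
      D (s.piecewise (fun i => (t * c i) • u) B)
        = (∏ i ∈ s, (t * c i)) * D (s.piecewise (fun _ => u) B) := by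
    intro s
    have : s.piecewise (fun i => (t * c i) • u) B
        = s.piecewise (fun i => (t * c i) • (s.piecewise (fun _ => u) B i))
            (s.piecewise (fun _ => u) B) := by
      ext i j
      by_cases hi : i ∈ s
      · simp [Finset.piecewise_eq_of_mem _ _ _ hi]
      · simp [Finset.piecewise_eq_of_notMem _ _ _ hi]
    rw [this,
      show D (s.piecewise (fun i => (t * c i) • s.piecewise (fun _ => u) B i)
          (s.piecewise (fun _ => u) B))
        = (∏ i ∈ s, (t * c i)) • D (s.piecewise (fun _ => u) B)
      from D.toMultilinearMap.map_piecewise_smul _ _ _]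
    simp [smul_eq_mul]
  -- terms with at least two elements vanish
  have hzero : ∀ s : Finset (Fin k), 2 ≤ s.card →
      D (s.piecewise (fun _ => u) B) = 0 := by
    intro s hs
    obtain ⟨i, hi, j, hj, hij⟩ := Finset.one_lt_card.mp hs
    exact D.map_eq_zero_of_eq _
      (by simp [Finset.piecewise_eq_of_mem _ _ _ hi,
        Finset.piecewise_eq_of_mem _ _ _ hj]) hij
  -- restrict the sum to sets of card ≤ 1
  set T : Finset (Finset (Fin k)) :=
    insert ∅ (Finset.univ.image fun j : Fin k => {j}) with hT
  have hsum : ∑ s : Finset (Fin k), D (s.piecewise (fun i => (t * c i) • u) B)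
      = ∑ s ∈ T, D (s.piecewise (fun i => (t * c i) • u) B) := by
    refine (Finset.sum_subset (Finset.subset_univ T) ?_).symm
    intro s _ hsT
    have hcard : 2 ≤ s.card := by
      by_contra h
      push_neg at h
      interval_cases hsc : s.card
      · exact hsT (by simp [hT, Finset.card_eq_zero.mp hsc])
      · obtain ⟨j, hj⟩ := Finset.card_eq_one.mp hsc
        exact hsT (by simp [hT, hj])
    rw [key s, hzero s hcard, mul_zero]
  rw [hsum, hT]
  have hnotmem : (∅ : Finset (Fin k)) ∉ Finset.univ.image fun j : Fin k => {j} := by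
    simp
  rw [Finset.sum_insert hnotmem,
    Finset.sum_image (by intro a _ b _ h; simpa using h)]
  have hsingle : ∀ j : Fin k,
      D (({j} : Finset (Fin k)).piecewise (fun i => (t * c i) • u) B)
        = (t * c j) * D (Function.update B j u) := by
    intro j
    rw [key, Finset.prod_singleton, Finset.piecewise_singleton]
  simp only [hsingle]
  simp only [Finset.piecewise_empty]
  congr 1
  rw [Finset.sum_mul]
  exact Finset.sum_congr rfl fun j _ => by ring
end
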